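/- Let m ≥ 1 and let J ⊆ A be the ideal generated by τ^m·x − 𝐟_(m−1), 𝐟_m, h·x, and h^(2m) (the ideal J_n for the odd case n = 2m−1). Then J + ⟨ε⟩ = ⟨ε, x, h^(2m) − (−1)^m·τ^(m+1)·x²⟩ as ideals of A. (Proposition 4.6(ii), case n = 2m−1.) -/
import Mathlib


/- Context: `A = ℤ[ε,τ,σ,h,x]/(2ε, τσ-1)` models `𝒜[h,x]` where
`𝒜 = ℤ[ε,τ,τ⁻¹]/(2ε)`, and for `m ≥ 0`,
`𝐟_m = ∑_{a+2b=m} C(a+b,b)·ε^(2a+1)·τ^b·h^(2b) ∈ A`. -/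

noncomputable section

open MvPolynomial

abbrev Apre : Type := MvPolynomial (Fin 5) ℤ  -- ε, τ, σ, h, x

def AI : Ideal Apre := Ideal.span {2 * X 0, X 1 * X 2 - 1}

abbrev A : Type := Apre ⧸ AI

def ε : A := Ideal.Quotient.mk AI (X 0)
def τ : A := Ideal.Quotient.mk AI (X 1)
def σ : A := Ideal.Quotient.mk AI (X 2)
def h : A := Ideal.Quotient.mk AI (X 3)
def x : A := Ideal.Quotient.mk AI (X 4)

def f (m : ℕ) : A :=
  ∑ b ∈ Finset.range (m / 2 + 1),
    (Nat.choose (m - b) b : A) * ε ^ (2 * (m - 2 * b) + 1) * τ ^ b * h ^ (2 * b)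


lemma f_mem_span_eps (k : ℕ) : f k ∈ Ideal.span ({ε} : Set A) := by
  unfold f
  refine Ideal.sum_mem _ fun b _ => ?_
  rw [Ideal.mem_span_singleton]
  exact ⟨(Nat.choose (k - b) b : A) * ε ^ (2 * (k - 2 * b)) * τ ^ b * h ^ (2 * b), by ring⟩

lemma tau_sig : τ * σ = 1 := by
  have h1 : (Ideal.Quotient.mk AI) (X 1 * X 2 - 1) = 0 :=
    Ideal.Quotient.eq_zero_iff_mem.mpr (Ideal.subset_span (by simp [Set.mem_insert_iff]))
  rw [map_sub, map_mul, map_one, sub_eq_zero] at h1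
  exact h1

/- Statement 10 (Proposition 4.6(ii), odd case `n = 2m-1`):
`J + ⟨ε⟩ = ⟨ε, x, h^(2m) - (-1)^m·τ^(m+1)·x²⟩`. -/
set_option maxHeartbeats 1600000 in
theorem J_plus_eps_odd (m : ℕ) (hm : 1 ≤ m) :
    Ideal.span {τ ^ m * x - f (m - 1), f m, h * x, h ^ (2 * m)} + Ideal.span {ε}
      = Ideal.span {ε, x, h ^ (2 * m) - (-1 : A) ^ m * τ ^ (m + 1) * x ^ 2} := by
  have st : σ ^ m * τ ^ m = 1 := by
    rw [← mul_pow, mul_comm, tau_sig, one_pow]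
  rw [Submodule.add_eq_sup]
  set q : A := h ^ (2 * m) - (-1 : A) ^ m * τ ^ (m + 1) * x ^ 2 with hq
  have εmem : ε ∈ Ideal.span ({ε, x, q} : Set A) := Ideal.subset_span (by simp)
  have xmem : x ∈ Ideal.span ({ε, x, q} : Set A) := Ideal.subset_span (by simp)
  have qmem : q ∈ Ideal.span ({ε, x, q} : Set A) := Ideal.subset_span (by simp)
  have fmem : ∀ k, f k ∈ Ideal.span ({ε, x, q} : Set A) := fun k =>
    Ideal.span_le.mpr (Set.singleton_subset_iff.mpr εmem) (f_mem_span_eps k)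
  -- x is in the left side
  have key : σ ^ m * (τ ^ m * x - f (m - 1)) + σ ^ m * f (m - 1) = x := by
    have : σ ^ m * (τ ^ m * x - f (m - 1)) + σ ^ m * f (m - 1) = (σ ^ m * τ ^ m) * x := by
      ring
    rw [this, st, one_mul]
  have g1 : (τ ^ m * x - f (m - 1)) ∈
      Ideal.span ({τ ^ m * x - f (m - 1), f m, h * x, h ^ (2 * m)} : Set A) :=
    Ideal.subset_span (by simp)
  have g4 : h ^ (2 * m) ∈
      Ideal.span ({τ ^ m * x - f (m - 1), f m, h * x, h ^ (2 * m)} : Set A) :=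
    Ideal.subset_span (by simp)
  have xL : x ∈ Ideal.span ({τ ^ m * x - f (m - 1), f m, h * x, h ^ (2 * m)} : Set A)
      ⊔ Ideal.span ({ε} : Set A) := by
    have hx : σ ^ m * (τ ^ m * x - f (m - 1)) + σ ^ m * f (m - 1) ∈
        Ideal.span ({τ ^ m * x - f (m - 1), f m, h * x, h ^ (2 * m)} : Set A)
          ⊔ Ideal.span ({ε} : Set A) :=
      add_mem (Ideal.mem_sup_left (Ideal.mul_mem_left _ (σ ^ m) g1))
        (Ideal.mem_sup_right (Ideal.mul_mem_left _ (σ ^ m) (f_mem_span_eps (m - 1))))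
    rwa [key] at hx
  refine le_antisymm (sup_le (Ideal.span_le.mpr ?_) (Ideal.span_le.mpr ?_))
    (Ideal.span_le.mpr ?_)
  · intro g hg
    simp only [Set.mem_insert_iff, Set.mem_singleton_iff] at hg
    rcases hg with rfl | rfl | rfl | rfl
    · exact sub_mem (Ideal.mul_mem_left _ _ xmem) (fmem _)
    · exact fmem _
    · exact Ideal.mul_mem_left _ _ xmem
    · have : h ^ (2 * m) = q + ((-1 : A) ^ m * τ ^ (m + 1) * x) * x := by
        rw [hq]; ring
      rw [this]
      exact add_mem qmem (Ideal.mul_mem_left _ _ xmem)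
  · intro g hg
    simp only [Set.mem_singleton_iff] at hg
    subst hg
    exact εmem
  · intro g hg
    simp only [Set.mem_insert_iff, Set.mem_singleton_iff] at hg
    rcases hg with rfl | rfl | rfl
    · exact Ideal.mem_sup_right (Ideal.subset_span rfl)
    · exact xL
    · rw [hq]
      have : h ^ (2 * m) - (-1 : A) ^ m * τ ^ (m + 1) * x ^ 2
          = h ^ (2 * m) - ((-1 : A) ^ m * τ ^ (m + 1) * x) * x := by ring
      rw [this]
      exact sub_mem (Ideal.mem_sup_left g4) (Ideal.mul_mem_left _ _ xL)


end
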